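/- Let β ∈ (F⊗F)[x₁,x₂] be a polynomial all of whose coefficients are symmetric weak Frobenius elements of F⊗F, and let ∂^β be the β-twisted Demazure operator, i.e. the unique 𝕜-linear map with (x₁ − x₂)·∂^β(a) = β·a − σ(a)·β for all a ∈ (F⊗F)[x₁,x₂]. Then: (a) for every P ∈ 𝕜[x₁,x₂] (viewed as a central polynomial in (F⊗F)[x₁,x₂]), ∂^β(P) = β·∂(P) = ∂(P)·β, where ∂(P) is the classical Demazure operator characterized by (x₁ − x₂)·∂(P) = P − σ(P); moreover ∂^β(σ(P)) = −∂^β(P); (b) ∂^β(f) = 0 for every f ∈ F⊗F; (c) ∂^β(a·b) = σ(a)·∂^β(b) + ∂^β(a)·b for all a, b ∈ (F⊗F)[x₁,x₂] (∂^β is a σ-twisted left derivation). -/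

import Mathlib

/-!
Properties of the β-twisted Demazure operator `∂^β`:
(a) on central polynomials it is `β·∂(−) = ∂(−)·β` and is antisymmetric;
(b) it kills constants; (c) it is a σ-twisted left derivation.
The polynomial ring `(F⊗F)[x₁,x₂]` is modelled as `(F ⊗[k] F) ⊗[k] k[x₁,x₂]`.
-/

open scoped TensorProduct
open MvPolynomial

variable (k F : Type*)

/-- Weak Frobenius elements of `F ⊗ F`: `(a⊗b)·Δ = Δ·(b⊗a)` for all `a, b ∈ F`. -/
def IsWeakFrobenius [CommSemiring k] [Ring F] [Algebra k F] (Δ : F ⊗[k] F) : Prop :=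
  ∀ a b : F, (a ⊗ₜ[k] b) * Δ = Δ * (b ⊗ₜ[k] a)

/-- Symmetric elements of `F ⊗ F`: fixed by the flip. -/
def IsSymmEl [CommSemiring k] [Ring F] [Algebra k F] (Δ : F ⊗[k] F) : Prop :=
  (Algebra.TensorProduct.comm k F F) Δ = Δ

/-- The polynomial ring `(F⊗F)[x₁,x₂]`, modelled as `(F⊗F) ⊗ 𝕜[x₁,x₂]`. -/
abbrev PolyFF (k F : Type*) [CommSemiring k] [Ring F] [Algebra k F] :=
  (F ⊗[k] F) ⊗[k] MvPolynomial (Fin 2) k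

/-- The automorphism `σ` of `(F⊗F)[x₁,x₂]` flipping the two tensor factors
and interchanging `x₁` and `x₂`. -/
noncomputable def sigmaP [CommSemiring k] [Ring F] [Algebra k F] :
    PolyFF k F ≃ₐ[k] PolyFF k F :=
  Algebra.TensorProduct.congr (Algebra.TensorProduct.comm k F F)
    (MvPolynomial.renameEquiv k (Equiv.swap (0 : Fin 2) 1))

/-- The element `x₁ - x₂` of `(F⊗F)[x₁,x₂]`. -/
noncomputable def xdiff [CommRing k] [Ring F] [Algebra k F] : PolyFF k F :=
  (1 : F ⊗[k] F) ⊗ₜ[k]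
    ((X (0 : Fin 2) : MvPolynomial (Fin 2) k) - (X (1 : Fin 2) : MvPolynomial (Fin 2) k))

section Aux
variable {k F}

/-- elements `1 ⊗ p` are central -/
lemma aux_central [CommSemiring k] [Ring F] [Algebra k F]
    (p : MvPolynomial (Fin 2) k) (z : PolyFF k F) :
    z * ((1 : F ⊗[k] F) ⊗ₜ[k] p) = ((1 : F ⊗[k] F) ⊗ₜ[k] p) * z := by
  induction z using TensorProduct.induction_on with
  | zero => simp
  | tmul f q => rw [Algebra.TensorProduct.tmul_mul_tmul,
      Algebra.TensorProduct.tmul_mul_tmul, mul_one, one_mul, mul_comm]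
  | add x y hx hy => rw [add_mul, mul_add, hx, hy]

lemma aux_sigma_tmul [CommSemiring k] [Ring F] [Algebra k F]
    (f : F ⊗[k] F) (p : MvPolynomial (Fin 2) k) :
    sigmaP k F (f ⊗ₜ[k] p)
      = (Algebra.TensorProduct.comm k F F f) ⊗ₜ[k] (rename (Equiv.swap (0 : Fin 2) 1) p) := by
  simp [sigmaP, Algebra.TensorProduct.congr]

lemma aux_wf [CommSemiring k] [Ring F] [Algebra k F] {Δ : F ⊗[k] F}
    (h : IsWeakFrobenius k F Δ) (f : F ⊗[k] F) :
    Δ * f = (Algebra.TensorProduct.comm k F F f) * Δ := by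
  induction f using TensorProduct.induction_on with
  | zero => simp
  | tmul a b => rw [Algebra.TensorProduct.comm_tmul]; exact (h b a).symm
  | add x y hx hy => rw [mul_add, map_add, add_mul, hx, hy]

lemma aux_ring {R : Type*} [Ring R] (β a b A B : R) :
    β * (a * b) - A * B * β = A * (β * b - B * β) + (β * a - A * β) * b := by
  noncomm_ring

lemma aux_cancel [Field k] [Ring F] [Algebra k F] {u v : PolyFF k F}
    (h : xdiff k F * u = xdiff k F * v) : u = v := by
  set Q : MvPolynomial (Fin 2) k := X 0 - X 1 with hQdef
  have hQ : Q ≠ 0 := by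
    intro h0
    have := congrArg (coeff (Finsupp.single (0 : Fin 2) 1)) h0
    simp [hQdef, coeff_X', Finsupp.single_eq_single_iff] at this
  set L : MvPolynomial (Fin 2) k →ₗ[k] MvPolynomial (Fin 2) k := LinearMap.mulLeft k Q with hL
  have hLinj : Function.Injective L := fun a b hab => by
    exact mul_left_cancel₀ hQ hab
  have key : ∀ z : PolyFF k F, xdiff k F * z = (L.lTensor (F ⊗[k] F)) z := by
    intro z
    induction z using TensorProduct.induction_on with
    | zero => simp
    | tmul f q =>
        rw [xdiff, Algebra.TensorProduct.tmul_mul_tmul, one_mul, LinearMap.lTensor_tmul]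
        rfl
    | add x y hx hy => rw [mul_add, map_add, hx, hy]
  have := Module.Flat.lTensor_preserves_injective_linearMap (M := F ⊗[k] F) L hLinj
  exact this (by rw [← key, ← key, h])

end Aux

set_option maxHeartbeats 1000000 in
theorem stmt10 [Field k] [Ring F] [Algebra k F] [FiniteDimensional k F]
    (β : PolyFF k F)
    -- `β` has symmetric weak Frobenius coefficients
    (s : Finset (Fin 2 →₀ ℕ)) (cf : (Fin 2 →₀ ℕ) → F ⊗[k] F)
    (hwf : ∀ mo, IsWeakFrobenius k F (cf mo)) (hsym : ∀ mo, IsSymmEl k F (cf mo))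
    (hβ : β = ∑ mo ∈ s, (cf mo) ⊗ₜ[k] (MvPolynomial.monomial mo (1 : k)))
    -- `D = ∂^β` is the β-twisted Demazure operator
    (D : PolyFF k F →ₗ[k] PolyFF k F)
    (hD : ∀ a : PolyFF k F, xdiff k F * D a = β * a - (sigmaP k F) a * β) :
    -- (a) for scalar polynomials `P`, with `∂P` the classical Demazure operator:
    -- `∂^β(P) = β·∂(P) = ∂(P)·β` and `∂^β(σ(P)) = −∂^β(P)`
    (∀ P DP : MvPolynomial (Fin 2) k,
      ((X (0 : Fin 2) : MvPolynomial (Fin 2) k) - X 1) * DP =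
          P - MvPolynomial.rename (Equiv.swap (0 : Fin 2) 1) P →
      D ((1 : F ⊗[k] F) ⊗ₜ[k] P) = β * ((1 : F ⊗[k] F) ⊗ₜ[k] DP) ∧
      D ((1 : F ⊗[k] F) ⊗ₜ[k] P) = ((1 : F ⊗[k] F) ⊗ₜ[k] DP) * β ∧
      D ((sigmaP k F) ((1 : F ⊗[k] F) ⊗ₜ[k] P)) = - D ((1 : F ⊗[k] F) ⊗ₜ[k] P)) ∧
    -- (b) `∂^β` kills constants
    (∀ f : F ⊗[k] F, D (f ⊗ₜ[k] (1 : MvPolynomial (Fin 2) k)) = 0) ∧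
    -- (c) `∂^β` is a σ-twisted left derivation
    (∀ a b : PolyFF k F, D (a * b) = (sigmaP k F) a * D b + D a * b) := by
    -- xdiff is central
  have hxc : ∀ z : PolyFF k F, z * xdiff k F = xdiff k F * z := fun z => aux_central _ z
  -- β commutes with constants, twisted by σ
  have hβcomm : ∀ f : F ⊗[k] F,
      β * (f ⊗ₜ[k] (1 : MvPolynomial (Fin 2) k))
        = sigmaP k F (f ⊗ₜ[k] (1 : MvPolynomial (Fin 2) k)) * β := by
    intro f
    rw [aux_sigma_tmul, map_one, hβ, Finset.sum_mul, Finset.mul_sum]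
    refine Finset.sum_congr rfl fun mo _ => ?_
    rw [Algebra.TensorProduct.tmul_mul_tmul, Algebra.TensorProduct.tmul_mul_tmul,
      mul_one, one_mul, aux_wf (hwf mo) f]
  -- part (b)
  have partb : ∀ f : F ⊗[k] F, D (f ⊗ₜ[k] (1 : MvPolynomial (Fin 2) k)) = 0 := by
    intro f
    refine aux_cancel (h := ?_)
    rw [hD, mul_zero, hβcomm, sub_self]
  -- the first half of part (a)
  have parta1 : ∀ P DP : MvPolynomial (Fin 2) k,
      ((X (0 : Fin 2) : MvPolynomial (Fin 2) k) - X 1) * DP =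
          P - MvPolynomial.rename (Equiv.swap (0 : Fin 2) 1) P →
      D ((1 : F ⊗[k] F) ⊗ₜ[k] P) = β * ((1 : F ⊗[k] F) ⊗ₜ[k] DP) := by
    intro P DP h
    refine aux_cancel (h := ?_)
    rw [hD, aux_sigma_tmul, map_one, ← aux_central, ← mul_sub, ← TensorProduct.tmul_sub, ← h]
    have : (1 : F ⊗[k] F) ⊗ₜ[k] (((X (0 : Fin 2) : MvPolynomial (Fin 2) k) - X 1) * DP)
        = xdiff k F * ((1 : F ⊗[k] F) ⊗ₜ[k] DP) := by
      rw [xdiff, Algebra.TensorProduct.tmul_mul_tmul, one_mul]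
    rw [this, ← mul_assoc, hxc β, mul_assoc]
  refine ⟨fun P DP h => ?_, partb, fun a b => ?_⟩
  · have h1 := parta1 P DP h
    have hswap : rename (Equiv.swap (0 : Fin 2) 1)
        (rename (Equiv.swap (0 : Fin 2) 1) P) = P := by
      rw [rename_rename]
      have : (Equiv.swap (0 : Fin 2) 1) ∘ (Equiv.swap (0 : Fin 2) 1) = id := by
        funext a; simp
      rw [this, rename_id, AlgHom.id_apply]
    set rP := rename (Equiv.swap (0 : Fin 2) 1) P with hrP
    have h2 : ((X (0 : Fin 2) : MvPolynomial (Fin 2) k) - X 1) * (0 : MvPolynomial (Fin 2) k) =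
        (P + rP) - rename (Equiv.swap (0 : Fin 2) 1) (P + rP) := by
      rw [mul_zero, map_add, ← hrP, hswap]
      abel
    have h3 := parta1 (P + rP) 0 h2
    rw [TensorProduct.tmul_zero, mul_zero, TensorProduct.tmul_add, map_add] at h3
    refine ⟨h1, by rw [h1, aux_central], ?_⟩
    rw [aux_sigma_tmul, map_one, ← hrP]
    exact eq_neg_of_add_eq_zero_right h3
  · refine aux_cancel (h := ?_)
    have e1 : xdiff k F * D (a * b) = β * (a * b) - sigmaP k F a * sigmaP k F b * β := by
      rw [hD, map_mul]
    have e2 : xdiff k F * (sigmaP k F a * D b)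
        = sigmaP k F a * (β * b - sigmaP k F b * β) := by
      rw [← mul_assoc, ← hxc (sigmaP k F a), mul_assoc, hD]
    have e3 : xdiff k F * (D a * b) = (β * a - sigmaP k F a * β) * b := by
      rw [← mul_assoc, hD]
    rw [e1, mul_add, e2, e3]
    exact aux_ring _ _ _ _ _
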